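/- For the one-population NNLIF model with refractory period τ, there exists at least one stationary firing rate, i.e., a number N with 0 < N < 1/τ satisfying N·(τ + I(N)) = 1, where I(N) := ∫_0^∞ (e^{-s²/2}/s)(e^{s·(V_F − bN − ν_{ext})/√a} − e^{s·(V_R − bN − ν_{ext})/√a}) ds. Moreover, if b ≤ 0 (average-inhibitory population) this stationary firing rate is unique. -/

import Mathlib

/-!
`I` is the integral `K` of a kernel that is positive, dominated by a shifted Gaussian, and, under a
common shift `δ` of both thresholds, multiplied by `e^{sδ}`. Hence `I` is positive and continuous,
so `Φ(N) = N (τ + I(N))` runs from `Φ(0) = 0` to `Φ(1/τ) > 1` and takes the value `1` in between.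
For `b ≤ 0` the rescaled thresholds move up with `N`, so `I` is nondecreasing and `Φ` is strictly
increasing on `(0, ∞)`.
-/

/-- K(w_R, w_F) := ∫_0^∞ (e^{-s²/2}/s)(e^{s·w_F} − e^{s·w_R}) ds (Lebesgue integral on (0,∞)). -/
noncomputable def K (wR wF : ℝ) : ℝ :=
  ∫ s in Set.Ioi (0 : ℝ), Real.exp (-s ^ 2 / 2) / s * (Real.exp (s * wF) - Real.exp (s * wR))

/-- I(N) := ∫_0^∞ (e^{-s²/2}/s)(e^{s·(V_F − bN − ν_{ext})/√a} − e^{s·(V_R − bN − ν_{ext})/√a}) ds. -/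
noncomputable def Ione (VR VF a b ν N : ℝ) : ℝ :=
  K ((VR - b * N - ν) / Real.sqrt a) ((VF - b * N - ν) / Real.sqrt a)

open MeasureTheory Real Set

lemma exp_sub_exp_le_sub_mul_exp (x y : ℝ) : exp x - exp y ≤ (x - y) * exp x := by
  -- tangent line of the convex function `exp` at `x`
  have h₁ : y - x + 1 ≤ exp (y - x) := add_one_le_exp _
  have h₂ : exp (y - x) * exp x = exp y := by rw [← exp_add]; ring_nf
  nlinarith [exp_pos x]

lemma abs_exp_sub_exp_le (x y : ℝ) : |exp x - exp y| ≤ |x - y| * exp (max x y) := by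
  rcases le_total y x with h | h
  · rw [abs_of_nonneg (sub_nonneg.2 (exp_le_exp.2 h)), abs_of_nonneg (sub_nonneg.2 h),
      max_eq_left h]
    exact exp_sub_exp_le_sub_mul_exp _ _
  · rw [abs_sub_comm, abs_sub_comm x, abs_of_nonneg (sub_nonneg.2 (exp_le_exp.2 h)),
      abs_of_nonneg (sub_nonneg.2 h), max_eq_right h]
    exact exp_sub_exp_le_sub_mul_exp _ _

lemma integrable_exp_mul_sub_sq_div_two (C : ℝ) :
    Integrable fun s : ℝ => exp (C * s - s ^ 2 / 2) := by
  have hgauss : Integrable fun s : ℝ => exp (-(1 / 2 : ℝ) * (s - C) ^ 2) :=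
    (integrable_exp_neg_mul_sq (by norm_num)).comp_sub_right C
  refine (hgauss.const_mul (exp (C ^ 2 / 2))).congr (Filter.Eventually.of_forall fun s => ?_)
  simp only [← exp_add]
  ring_nf

noncomputable def kIntegrand (wR wF s : ℝ) : ℝ :=
  exp (-s ^ 2 / 2) / s * (exp (s * wF) - exp (s * wR))

lemma K_eq_integral_kIntegrand (wR wF : ℝ) : K wR wF = ∫ s in Ioi 0, kIntegrand wR wF s := rfl

lemma measurable_kIntegrand (wR wF : ℝ) : Measurable (kIntegrand wR wF) := by
  unfold kIntegrand; fun_prop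

lemma kIntegrand_pos {wR wF s : ℝ} (h : wR < wF) (hs : 0 < s) : 0 < kIntegrand wR wF s :=
  mul_pos (div_pos (exp_pos _) hs) (sub_pos.2 (exp_lt_exp.2 (mul_lt_mul_of_pos_left h hs)))

lemma kIntegrand_nonneg {wR wF s : ℝ} (h : wR ≤ wF) (hs : 0 ≤ s) : 0 ≤ kIntegrand wR wF s :=
  mul_nonneg (div_nonneg (exp_pos _).le hs)
    (sub_nonneg.2 (exp_le_exp.2 (mul_le_mul_of_nonneg_left h hs)))

lemma kIntegrand_add_add (wR wF δ s : ℝ) :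
    kIntegrand (wR + δ) (wF + δ) s = exp (s * δ) * kIntegrand wR wF s := by
  simp only [kIntegrand, mul_add, exp_add]
  ring

lemma norm_kIntegrand_le {wR wF C s : ℝ} (hs : 0 < s) (hR : wR ≤ C) (hF : wF ≤ C) :
    ‖kIntegrand wR wF s‖ ≤ |wF - wR| * exp (C * s - s ^ 2 / 2) := by
  have hdiff : |exp (s * wF) - exp (s * wR)| ≤ s * |wF - wR| * exp (s * C) := by
    calc |exp (s * wF) - exp (s * wR)|
        ≤ |s * wF - s * wR| * exp (max (s * wF) (s * wR)) := abs_exp_sub_exp_le _ _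
      _ ≤ s * |wF - wR| * exp (s * C) := by
        rw [← mul_sub, abs_mul, abs_of_pos hs]
        gcongr
        exact max_le (mul_le_mul_of_nonneg_left hF hs.le)
          (mul_le_mul_of_nonneg_left hR hs.le)
  calc ‖kIntegrand wR wF s‖
      = exp (-s ^ 2 / 2) / s * |exp (s * wF) - exp (s * wR)| := by
        rw [kIntegrand, norm_mul, norm_div, norm_of_nonneg (exp_pos _).le, norm_of_nonneg hs.le,
          norm_eq_abs]
    _ ≤ exp (-s ^ 2 / 2) / s * (s * |wF - wR| * exp (s * C)) := by gcongr
    _ = |wF - wR| * exp (C * s - s ^ 2 / 2) := by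
        rw [show C * s - s ^ 2 / 2 = s * C + -s ^ 2 / 2 by ring, exp_add]
        field_simp

lemma integrableOn_kIntegrand (wR wF : ℝ) : IntegrableOn (kIntegrand wR wF) (Ioi 0) := by
  refine Integrable.mono' ((integrable_exp_mul_sub_sq_div_two (max wR wF)).const_mul
    |wF - wR|).integrableOn (measurable_kIntegrand wR wF).aestronglyMeasurable ?_
  filter_upwards [ae_restrict_mem measurableSet_Ioi] with s hs
  exact norm_kIntegrand_le hs (le_max_left _ _) (le_max_right _ _)

lemma K_pos {wR wF : ℝ} (h : wR < wF) : 0 < K wR wF := by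
  have hnonneg : 0 ≤ᵐ[volume.restrict (Ioi 0)] kIntegrand wR wF := by
    filter_upwards [ae_restrict_mem measurableSet_Ioi] with s hs
    exact kIntegrand_nonneg h.le (le_of_lt hs)
  have hsupport : Ioi (0 : ℝ) ⊆ Function.support (kIntegrand wR wF) :=
    fun s hs => (kIntegrand_pos h hs).ne'
  rw [K_eq_integral_kIntegrand, setIntegral_pos_iff_support_of_nonneg_ae hnonneg
    (integrableOn_kIntegrand wR wF), inter_eq_right.2 hsupport, volume_Ioi]
  exact ENNReal.zero_lt_top

lemma monotone_K_add_add {wR wF : ℝ} (h : wR ≤ wF) :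
    Monotone fun δ => K (wR + δ) (wF + δ) := by
  intro δ₁ δ₂ hδ
  simp only [K_eq_integral_kIntegrand]
  refine setIntegral_mono_on (integrableOn_kIntegrand _ _) (integrableOn_kIntegrand _ _)
    measurableSet_Ioi fun s hs => ?_
  rw [kIntegrand_add_add, kIntegrand_add_add]
  have hs : (0 : ℝ) < s := hs
  gcongr
  exact kIntegrand_nonneg h hs.le

lemma continuous_K : Continuous fun w : ℝ × ℝ => K w.1 w.2 := by
  refine continuous_iff_continuousAt.2 fun w₀ => ?_
  set C := ‖w₀‖ + 1
  refine continuousAt_of_dominated (bound := fun s => 2 * C * exp (C * s - s ^ 2 / 2))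
    (Filter.Eventually.of_forall fun w => (measurable_kIntegrand _ _).aestronglyMeasurable)
    ?_ ((integrable_exp_mul_sub_sq_div_two C).const_mul _).restrict ?_
  · filter_upwards [Metric.ball_mem_nhds w₀ one_pos] with w hw
    filter_upwards [ae_restrict_mem measurableSet_Ioi] with s hs
    have hw : ‖w‖ ≤ C := (norm_lt_of_mem_ball hw).le
    have h₁ : |w.1| ≤ C := (norm_fst_le w).trans hw
    have h₂ : |w.2| ≤ C := (norm_snd_le w).trans hw
    calc ‖kIntegrand w.1 w.2 s‖ ≤ |w.2 - w.1| * exp (C * s - s ^ 2 / 2) :=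
          norm_kIntegrand_le hs (le_of_abs_le h₁) (le_of_abs_le h₂)
      _ ≤ 2 * C * exp (C * s - s ^ 2 / 2) := by
          gcongr
          exact (abs_sub _ _).trans (by linarith)
  · filter_upwards with s
    fun_prop

lemma Ione_eq_K_add_add (VR VF a b ν N : ℝ) :
    Ione VR VF a b ν N =
      K ((VR - ν) / √a + -b / √a * N) ((VF - ν) / √a + -b / √a * N) := by
  rw [Ione]
  congr 1 <;> ring

lemma continuous_Ione (VR VF a b ν : ℝ) : Continuous (Ione VR VF a b ν) := by
  rw [funext (Ione_eq_K_add_add VR VF a b ν)]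
  exact continuous_K.comp (.prodMk (by fun_prop) (by fun_prop))

lemma Ione_pos {VR VF a : ℝ} (hV : VR < VF) (ha : 0 < a) (b ν N : ℝ) :
    0 < Ione VR VF a b ν N :=
  K_pos (by gcongr)

lemma monotone_Ione {VR VF b : ℝ} (hV : VR ≤ VF) (hb : b ≤ 0) (a ν : ℝ) :
    Monotone (Ione VR VF a b ν) := by
  have hshift : Monotone fun N : ℝ => -b / √a * N :=
    fun _ _ h => mul_le_mul_of_nonneg_left h (div_nonneg (neg_nonneg.2 hb) (sqrt_nonneg a))
  intro N₁ N₂ h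
  rw [Ione_eq_K_add_add, Ione_eq_K_add_add]
  exact monotone_K_add_add (by gcongr) (hshift h)

lemma exists_mem_Ioo_mul_add_eq_one {τ : ℝ} (hτ : 0 < τ) {I : ℝ → ℝ}
    (hI : ContinuousOn I (Icc 0 (1 / τ))) (hpos : 0 < I (1 / τ)) :
    ∃ N ∈ Ioo 0 (1 / τ), N * (τ + I N) = 1 := by
  have hright : 1 < 1 / τ * (τ + I (1 / τ)) := by
    rw [mul_add, one_div_mul_cancel hτ.ne', lt_add_iff_pos_right]
    positivity
  have hone : (1 : ℝ) ∈ Ioo (0 * (τ + I 0)) (1 / τ * (τ + I (1 / τ))) := by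
    rw [zero_mul]
    exact ⟨one_pos, hright⟩
  exact intermediate_value_Ioo (by positivity)
    (continuousOn_id.mul (continuousOn_const.add hI)) hone

lemma strictMonoOn_mul_add {τ : ℝ} {I : ℝ → ℝ} (hI : Monotone I)
    (hpos : ∀ N, 0 < τ + I N) :
    StrictMonoOn (fun N => N * (τ + I N)) (Ioi 0) := by
  intro N₁ hN₁ N₂ _ h
  calc N₁ * (τ + I N₁) < N₂ * (τ + I N₁) := mul_lt_mul_of_pos_right h (hpos N₁)
    _ ≤ N₂ * (τ + I N₂) :=
      mul_le_mul_of_nonneg_left (add_le_add_right (hI h.le) τ) (hN₁.out.trans h).le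

theorem one_population_steady_state (VR VF a τ b ν : ℝ)
    (hV : VR < VF) (ha : 0 < a) (hτ : 0 < τ) :
    (∃ N : ℝ, N ∈ Set.Ioo 0 (1 / τ) ∧ N * (τ + Ione VR VF a b ν N) = 1) ∧
    (b ≤ 0 → ∃! N : ℝ, N ∈ Set.Ioo 0 (1 / τ) ∧ N * (τ + Ione VR VF a b ν N) = 1) := by
  obtain ⟨N, hN, hΦN⟩ := exists_mem_Ioo_mul_add_eq_one hτ
    (continuous_Ione VR VF a b ν).continuousOn (Ione_pos hV ha b ν _)
  refine ⟨⟨N, hN, hΦN⟩, fun hb => ⟨N, ⟨hN, hΦN⟩, ?_⟩⟩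
  rintro N' ⟨hN', hΦN'⟩
  have hΦ_strictMono := strictMonoOn_mul_add (monotone_Ione hV.le hb a ν)
    fun M => add_pos hτ (Ione_pos hV ha b ν M)
  exact hΦ_strictMono.injOn hN'.1 hN.1 (hΦN'.trans hΦN.symm)
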